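/- For all natural numbers p and q with 1 ≤ p, 1 ≤ q and p ≠ q, if ω₃(p, q) = 1 then ω₃(q, p ^^^ q) = 1 and ω₃(p ^^^ q, p) = 1 (the quaternion property for the twist of the doubling product P₃). -/

import Mathlib

/-- Twist of the Cayley–Dickson doubling product `P₃ : (a,b)(c,d) = (ac − db*, a*d + cb)`. -/
def omega3 (p q : ℕ) : ℤ :=
  if p = 0 ∧ q = 0 then 1
  else if p % 2 = 0 then
    if q % 2 = 0 then omega3 (p / 2) (q / 2)
    else if 0 < p / 2 then -omega3 (p / 2) (q / 2) else 1
  else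
    if q % 2 = 0 then omega3 (q / 2) (p / 2)
    else if 0 < p / 2 then omega3 (q / 2) (p / 2) else -1
termination_by p + q
decreasing_by all_goals omega

/-! The heart of the matter is the cyclic identity `ω(q, p ^^^ q) = ω(p, q)` for distinct nonzero
`p, q`; applied to `(p, q)` and then to `(q, p ^^^ q)` it gives the quaternion property. Writing
`p = 2r + a`, `q = 2s + b`, we have `p ^^^ q = 2 (r ^^^ s) + (a ^^^ b)`, and the recursion of `ω`
reduces the identity to the same identity for `(r, s)`, together with antisymmetry
`ω(q, p) = -ω(p, q)` for distinct nonzero indices and `ω(p, p) = -1` (the imaginary units square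
to `-1`), both proved by the same halving induction. -/

namespace Nat

lemma two_mul_xor_two_mul (a b : ℕ) : 2 * a ^^^ 2 * b = 2 * (a ^^^ b) := by
  simpa using xor_bit false a false b

lemma two_mul_xor_two_mul_add_one (a b : ℕ) : 2 * a ^^^ (2 * b + 1) = 2 * (a ^^^ b) + 1 := by
  simpa using xor_bit false a true b

lemma two_mul_add_one_xor_two_mul (a b : ℕ) : (2 * a + 1) ^^^ 2 * b = 2 * (a ^^^ b) + 1 := by
  simpa using xor_bit true a false b

lemma two_mul_add_one_xor_two_mul_add_one (a b : ℕ) :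
    (2 * a + 1) ^^^ (2 * b + 1) = 2 * (a ^^^ b) := by
  simpa using xor_bit true a true b

lemma xor_pos {a b : ℕ} (h : a ≠ b) : 0 < a ^^^ b :=
  pos_of_ne_zero (xor_ne_zero_iff.2 h)

lemma xor_ne_right {a : ℕ} (ha : a ≠ 0) (b : ℕ) : a ^^^ b ≠ b :=
  fun h => ha (xor_left_injective (h.trans (zero_xor b).symm))

end Nat

lemma omega3_zero_zero : omega3 0 0 = 1 := by
  rw [omega3]; simp

lemma omega3_even_even (r s : ℕ) : omega3 (2 * r) (2 * s) = omega3 r s := by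
  by_cases h : r = 0 ∧ s = 0
  · obtain ⟨rfl, rfl⟩ := h; rfl
  · rw [omega3]; simp_all

lemma omega3_even_odd {r : ℕ} (hr : 0 < r) (s : ℕ) :
    omega3 (2 * r) (2 * s + 1) = -omega3 r s := by
  rw [omega3]; simp [hr, Nat.mul_add_div]

lemma omega3_zero_odd (s : ℕ) : omega3 0 (2 * s + 1) = 1 := by
  rw [omega3]; simp

lemma omega3_odd_even (r s : ℕ) : omega3 (2 * r + 1) (2 * s) = omega3 s r := by
  rw [omega3]; simp [Nat.mul_add_div]

lemma omega3_odd_odd {r : ℕ} (hr : 0 < r) (s : ℕ) :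
    omega3 (2 * r + 1) (2 * s + 1) = omega3 s r := by
  rw [omega3]; simp [hr, Nat.mul_add_div]

lemma omega3_one_odd (s : ℕ) : omega3 1 (2 * s + 1) = -1 := by
  rw [omega3]; simp

lemma omega3_zero_left (q : ℕ) : omega3 0 q = 1 := by
  obtain ⟨s, rfl | rfl⟩ := Nat.even_or_odd' q
  · rcases s.eq_zero_or_pos with rfl | hs
    · exact omega3_zero_zero
    · simpa using (omega3_even_even 0 s).trans (omega3_zero_left s)
  · exact omega3_zero_odd s

lemma omega3_zero_right (p : ℕ) : omega3 p 0 = 1 := by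
  obtain ⟨r, rfl | rfl⟩ := Nat.even_or_odd' p
  · rcases r.eq_zero_or_pos with rfl | hr
    · exact omega3_zero_zero
    · simpa using (omega3_even_even r 0).trans (omega3_zero_right r)
  · simpa using (omega3_odd_even r 0).trans (omega3_zero_left r)

lemma omega3_self {p : ℕ} (hp : 0 < p) : omega3 p p = -1 := by
  obtain ⟨r, rfl | rfl⟩ := Nat.even_or_odd' p
  · rw [omega3_even_even]; exact omega3_self (by omega)
  · rcases r.eq_zero_or_pos with rfl | hr
    · exact omega3_one_odd 0
    · rw [omega3_odd_odd hr]; exact omega3_self hr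

lemma omega3_antisymm {p q : ℕ} (hp : 0 < p) (hq : 0 < q) (hpq : p ≠ q) :
    omega3 q p = -omega3 p q := by
  obtain ⟨r, rfl | rfl⟩ := Nat.even_or_odd' p <;>
    obtain ⟨s, rfl | rfl⟩ := Nat.even_or_odd' q
  · rw [omega3_even_even, omega3_even_even]
    exact omega3_antisymm (by omega) (by omega) (by omega)
  · rw [omega3_odd_even, omega3_even_odd (by omega), neg_neg]
  · rw [omega3_odd_even, omega3_even_odd (by omega)]
  · rcases r.eq_zero_or_pos with rfl | hr
    · rw [omega3_odd_odd (by omega), omega3_one_odd, omega3_zero_left, neg_neg]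
    rcases s.eq_zero_or_pos with rfl | hs
    · rw [omega3_odd_odd hr, omega3_one_odd, omega3_zero_left]
    rw [omega3_odd_odd hr, omega3_odd_odd hs]
    exact omega3_antisymm hs hr (by omega)
termination_by p + q

theorem omega3_cycle {p q : ℕ} (hp : 0 < p) (hq : 0 < q) (hpq : p ≠ q) :
    omega3 q (p ^^^ q) = omega3 p q := by
  obtain ⟨r, rfl | rfl⟩ := Nat.even_or_odd' p <;>
    obtain ⟨s, rfl | rfl⟩ := Nat.even_or_odd' q
  · rw [Nat.two_mul_xor_two_mul, omega3_even_even, omega3_even_even]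
    exact omega3_cycle (by omega) (by omega) (by omega)
  · have hr : 0 < r := by omega
    rw [Nat.two_mul_xor_two_mul_add_one, omega3_even_odd hr]
    rcases s.eq_zero_or_pos with rfl | hs
    · simpa [omega3_zero_right] using omega3_one_odd r
    rw [omega3_odd_odd hs]
    rcases eq_or_ne r s with rfl | hrs
    · simp [omega3_zero_left, omega3_self hr]
    rw [omega3_antisymm hs (Nat.xor_pos hrs) (Nat.xor_ne_right hr.ne' s).symm,
      omega3_cycle hr hs hrs]
  · have hs : 0 < s := by omega
    rw [Nat.two_mul_add_one_xor_two_mul, omega3_odd_even, omega3_even_odd hs]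
    rcases r.eq_zero_or_pos with rfl | hr
    · simp [omega3_zero_right, omega3_self hs]
    rcases eq_or_ne r s with rfl | hrs
    · simp [omega3_zero_right, omega3_self hs]
    rw [omega3_cycle hr hs hrs, omega3_antisymm hr hs hrs]
  · have hrs : r ≠ s := by omega
    rw [Nat.two_mul_add_one_xor_two_mul_add_one, omega3_odd_even]
    rcases r.eq_zero_or_pos with rfl | hr
    · simpa [omega3_self (show 0 < s by omega)] using (omega3_one_odd s).symm
    rw [omega3_odd_odd hr]
    rcases s.eq_zero_or_pos with rfl | hs
    · simp [omega3_zero_left, omega3_zero_right]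
    rw [omega3_antisymm hs (Nat.xor_pos hrs) (Nat.xor_ne_right hr.ne' s).symm,
      omega3_cycle hr hs hrs, omega3_antisymm hr hs hrs]
termination_by p + q

/-- The quaternion property for the twist of the doubling product P3. -/
theorem omega3_quaternion_property (p q : ℕ) (hp : 1 ≤ p) (hq : 1 ≤ q) (hpq : p ≠ q)
    (h : omega3 p q = 1) :
    omega3 q (p ^^^ q) = 1 ∧ omega3 (p ^^^ q) p = 1 := by
  have hqx : omega3 q (p ^^^ q) = 1 := (omega3_cycle hp hq hpq).trans h
  have hxp : omega3 (p ^^^ q) (q ^^^ (p ^^^ q)) = omega3 q (p ^^^ q) :=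
    omega3_cycle hq (Nat.xor_pos hpq) (Nat.xor_ne_right (Nat.pos_iff_ne_zero.mp hp) q).symm
  rw [Nat.xor_comm p q, Nat.xor_xor_cancel_left, Nat.xor_comm] at hxp
  exact ⟨hqx, hxp.trans hqx⟩
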